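/- Let I ⊆ K[x_0,…,x_n] be a homogeneous ideal and w' ∈ Γ^{n+1} with in_{w'}(I) a monomial ideal. Let g_1,…,g_s ∈ I with in_{w'}(I) = ⟨in_{w'}(g_1),…,in_{w'}(g_s)⟩, where g_i = x^{u_i} + Σ_v c_{iv} x^v with in_{w'}(g_i) = x^{u_i} and c_{iv} ≠ 0 implies x^v ∉ in_{w'}(I). Then the closure of C_I[w'] in ℝ^{n+1} equals {x ∈ ℝ^{n+1} : x·u_i ≤ val(c_{iv}) + x·v for all 1 ≤ i ≤ s and all v with c_{iv} ≠ 0}. -/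

import Mathlib

open MvPolynomial
open scoped Classical

noncomputable section

/-- Dot product `w·u` of a real weight vector with a nonnegative exponent vector. -/
def dotN {m : ℕ} (w : Fin m → ℝ) (u : Fin m →₀ ℕ) : ℝ := ∑ i, w i * (u i : ℝ)

/-- Dot product `w·u` of a real weight vector with an integer exponent vector. -/
def dotZ {n : ℕ} (w : Fin n → ℝ) (u : Fin n → ℤ) : ℝ := ∑ i, w i * (u i : ℝ)

/-- Dot product of two real vectors. -/
def dotR {m : ℕ} (c x : Fin m → ℝ) : ℝ := ∑ i, c i * x i

/-- A field `K` together with: a nontrivial real-valued (additive) valuation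
`val : K* → ℝ` (recorded as a function on `K`, constrained only at nonzero elements);
a residue field `𝕜` with the reduction map `res : K → 𝕜` (the canonical map
`R → 𝕜 = R/𝔪` on the valuation ring `R = {a : val a ≥ 0}`, junk elsewhere); and a fixed
splitting `t` of the valuation, i.e. a group-homomorphic section `w ↦ t^w` of `val`
defined on the value group `Γ = im val`. -/
structure ValSetup (K 𝕜 : Type) [Field K] [Field 𝕜] where
  val : K → ℝ
  val_mul : ∀ {a b : K}, a ≠ 0 → b ≠ 0 → val (a * b) = val a + val b
  val_add : ∀ {a b : K}, a ≠ 0 → b ≠ 0 → a + b ≠ 0 → min (val a) (val b) ≤ val (a + b)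
  val_one : val 1 = 0
  val_nontrivial : ∃ a : K, a ≠ 0 ∧ val a ≠ 0
  res : K → 𝕜
  res_add : ∀ {a b : K}, (a = 0 ∨ 0 ≤ val a) → (b = 0 ∨ 0 ≤ val b) → res (a + b) = res a + res b
  res_mul : ∀ {a b : K}, (a = 0 ∨ 0 ≤ val a) → (b = 0 ∨ 0 ≤ val b) → res (a * b) = res a * res b
  res_one : res 1 = 1
  res_zero : res 0 = 0
  res_eq_zero_iff : ∀ {a : K}, a ≠ 0 → 0 ≤ val a → (res a = 0 ↔ 0 < val a)
  res_surjective : ∀ c : 𝕜, ∃ a : K, (a = 0 ∨ 0 ≤ val a) ∧ res a = c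
  t : ℝ → K
  t_ne_zero : ∀ {r : ℝ}, (∃ a : K, a ≠ 0 ∧ val a = r) → t r ≠ 0
  t_add : ∀ {r₁ r₂ : ℝ}, (∃ a : K, a ≠ 0 ∧ val a = r₁) → (∃ a : K, a ≠ 0 ∧ val a = r₂) →
    t (r₁ + r₂) = t r₁ * t r₂
  val_t : ∀ {r : ℝ}, (∃ a : K, a ≠ 0 ∧ val a = r) → val (t r) = r

namespace ValSetup

variable {K 𝕜 : Type} [Field K] [Field 𝕜]

/-- The value group `Γ = val(K*) ⊆ ℝ`. -/
def Gamma (V : ValSetup K 𝕜) : Set ℝ := {r : ℝ | ∃ a : K, a ≠ 0 ∧ V.val a = r}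

/-- `trop(f)(w) = min { val(c_u) + w·u : c_u ≠ 0 }` for `f = Σ_u c_u x^u ∈ K[x_0,…,x_{m-1}]`. -/
def trop (V : ValSetup K 𝕜) {m : ℕ} (f : MvPolynomial (Fin m) K) (w : Fin m → ℝ) : ℝ :=
  sInf ((fun u => V.val (coeff u f) + dotN w u) '' (f.support : Set (Fin m →₀ ℕ)))

/-- The initial form `in_w(f) = Σ_{val(c_u)+w·u = trop(f)(w)} (t^{-val(c_u)} c_u)‾ x^u`
in `𝕜[x_0,…,x_{m-1}]`. -/
def initialForm (V : ValSetup K 𝕜) {m : ℕ} (w : Fin m → ℝ) (f : MvPolynomial (Fin m) K) :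
    MvPolynomial (Fin m) 𝕜 :=
  ∑ u ∈ f.support.filter (fun u => V.val (coeff u f) + dotN w u = V.trop f w),
    monomial u (V.res (V.t (-(V.val (coeff u f))) * coeff u f))

/-- The initial ideal `in_w(I) = ⟨in_w(f) : f ∈ I⟩ ⊆ 𝕜[x_0,…,x_{m-1}]`. -/
def initialIdeal (V : ValSetup K 𝕜) {m : ℕ} (w : Fin m → ℝ)
    (I : Ideal (MvPolynomial (Fin m) K)) : Ideal (MvPolynomial (Fin m) 𝕜) :=
  Ideal.span {g | ∃ f ∈ I, g = V.initialForm w f}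

/-- The Gröbner region `C_I[w] = {w' ∈ Γ^m : in_{w'}(I) = in_w(I)}`. -/
def groebnerRegion (V : ValSetup K 𝕜) {m : ℕ} (I : Ideal (MvPolynomial (Fin m) K))
    (w : Fin m → ℝ) : Set (Fin m → ℝ) :=
  {w' | (∀ i, w' i ∈ V.Gamma) ∧ V.initialIdeal w' I = V.initialIdeal w I}

end ValSetup

/-- `trop(g)(v) = min { v·u : c_u ≠ 0 }` for `g ∈ 𝕜[x]`, w.r.t. the trivial valuation on `𝕜`. -/
def tropTriv {𝕜 : Type} [Field 𝕜] {m : ℕ} (g : MvPolynomial (Fin m) 𝕜) (v : Fin m → ℝ) : ℝ :=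
  sInf ((fun u => dotN v u) '' (g.support : Set (Fin m →₀ ℕ)))

/-- Initial form `in_v(g)`, w.r.t. the trivial valuation on the residue field: the sum of the
terms of `g` whose exponents `u` minimize `v·u`. -/
def initialFormTriv {𝕜 : Type} [Field 𝕜] {m : ℕ} (v : Fin m → ℝ) (g : MvPolynomial (Fin m) 𝕜) :
    MvPolynomial (Fin m) 𝕜 :=
  ∑ u ∈ g.support.filter (fun u => dotN v u = tropTriv g v), monomial u (coeff u g)

/-- Initial ideal `in_v(J) = ⟨in_v(g) : g ∈ J⟩` w.r.t. the trivial valuation. -/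
def initialIdealTriv {𝕜 : Type} [Field 𝕜] {m : ℕ} (v : Fin m → ℝ)
    (J : Ideal (MvPolynomial (Fin m) 𝕜)) : Ideal (MvPolynomial (Fin m) 𝕜) :=
  Ideal.span {h | ∃ g ∈ J, h = initialFormTriv v g}

/-- A homogeneous ideal of `R[x_0,…,x_{m-1}]`: one containing all homogeneous components of
its elements. -/
def IsHomogIdeal {R : Type} [CommSemiring R] {m : ℕ} (I : Ideal (MvPolynomial (Fin m) R)) :
    Prop :=
  ∀ f ∈ I, ∀ d : ℕ, homogeneousComponent d f ∈ I

/-- A monomial ideal: an ideal generated by monomials. -/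
def IsMonomialIdeal {R : Type} [CommSemiring R] {m : ℕ} (J : Ideal (MvPolynomial (Fin m) R)) :
    Prop :=
  ∃ S : Set (Fin m →₀ ℕ), J = Ideal.span ((fun u => (monomial u 1 : MvPolynomial (Fin m) R)) '' S)

/-! The polyhedron `P` cut out by the inequalities is closed and contains `C_I[w']`: if one of them
failed at `w ∈ C_I[w']`, then `in_w(g_i)` would contain a monomial `x^v` with `v ≠ u_i`, and `x^v`
would lie in the monomial ideal `in_w(I) = in_{w'}(I)`, against the reducedness of the `g_i`.

Conversely, the strict inequalities define an open set `U ∋ w'` whose closure contains `P` (move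
along the segment towards `w'`), and `Γ^{n+1}` is dense, so it suffices that
`U ∩ Γ^{n+1} ⊆ C_I[w']`. For `w ∈ U ∩ Γ^{n+1}` every `in_w(g_i)` is `x^{u_i}`, so
`in_{w'}(I) ⊆ in_w(I)`. For the reverse inclusion one works degree by degree, `I` being
homogeneous: `in_w(I_d)` contains the degree-`d` part of `⟨x^{u_i}⟩`, and a dimension count
`dim in_w(I_d) ≤ dim I_d ≤ dim in_{w'}(I)_d` forces equality. -/

section DotProduct

variable {m : ℕ}

lemma dotN_add_right (w : Fin m → ℝ) (a b : Fin m →₀ ℕ) :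
    dotN w (a + b) = dotN w a + dotN w b := by
  simp only [dotN, Finsupp.coe_add, Pi.add_apply, Nat.cast_add, mul_add, Finset.sum_add_distrib]

lemma dotN_smul_add_smul (a b : ℝ) (x y : Fin m → ℝ) (u : Fin m →₀ ℕ) :
    dotN (a • x + b • y) u = a * dotN x u + b * dotN y u := by
  simp only [dotN, Finset.mul_sum, ← Finset.sum_add_distrib, Pi.add_apply, Pi.smul_apply,
    smul_eq_mul]
  exact Finset.sum_congr rfl fun _ _ => by ring

lemma continuous_dotN (u : Fin m →₀ ℕ) : Continuous fun x : Fin m → ℝ => dotN x u := by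
  unfold dotN
  fun_prop

end DotProduct

section Rank

open Cardinal

universe u

lemma MvPolynomial.rank_le_of_exists_coeff_ne_zero {σ R : Type u} [Field R]
    (W : Submodule R (MvPolynomial σ R)) (E : Set (σ →₀ ℕ))
    (h : ∀ p ∈ W, p ≠ 0 → ∃ v ∈ E, coeff v p ≠ 0) : Module.rank R W ≤ #E := by
  let φ : W →ₗ[R] E →₀ R :=
    (Finsupp.lsubtypeDomain E).comp ((basisMonomials σ R).repr.toLinearMap.comp W.subtype)
  have hφ : Function.Injective φ := by
    rw [← LinearMap.ker_eq_bot, Submodule.eq_bot_iff]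
    rintro ⟨p, hp⟩ hφp
    by_contra hne
    obtain ⟨v, hv, hc⟩ := h p hp (fun h0 => hne (Subtype.ext h0))
    exact hc (DFunLike.congr_fun hφp ⟨v, hv⟩)
  simpa using φ.rank_le_of_injective hφ

lemma MvPolynomial.cardinal_le_rank_span_monomial {σ R : Type u} [Field R] (E : Set (σ →₀ ℕ)) :
    #E ≤ Module.rank R (Submodule.span R ((fun v => monomial v (1 : R)) '' E)) := by
  let S := Submodule.span R ((fun v => monomial v (1 : R)) '' E)
  refine LinearIndependent.cardinal_le_rank (v := fun v : E =>
    (⟨monomial v 1, Submodule.subset_span ⟨v, v.2, rfl⟩⟩ : S)) (.of_comp S.subtype ?_)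
  exact (basisMonomials σ R).linearIndependent.comp _ Subtype.val_injective

lemma Submodule.eq_of_le_of_rank_le {K V : Type u} [DivisionRing K] [AddCommGroup V] [Module K V]
    {S₁ S₂ : Submodule K V} [Module.Finite K S₁] (hle : S₁ ≤ S₂)
    (h : Module.rank K S₂ ≤ Module.rank K S₁) : S₁ = S₂ := by
  have : Module.Finite K S₂ :=
    Module.rank_lt_aleph0_iff.1 (h.trans_lt (Module.rank_lt_aleph0 K S₁))
  exact Submodule.eq_of_le_of_finrank_le hle
    (Module.finrank_le_finrank_of_rank_le_rank (by simpa using h) (Module.rank_lt_aleph0 K S₁))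

end Rank

def Ideal.homogeneousPart {σ R : Type*} [CommSemiring R] (I : Ideal (MvPolynomial σ R)) (d : ℕ) :
    Submodule R (MvPolynomial σ R) :=
  I.restrictScalars R ⊓ homogeneousSubmodule σ R d

lemma MvPolynomial.mem_ideal_span_range_monomial {σ R ι : Type*} [CommSemiring R]
    {u : ι → σ →₀ ℕ} {q : MvPolynomial σ R} :
    q ∈ Ideal.span (Set.range fun i => monomial (u i) (1 : R)) ↔
      ∀ v ∈ q.support, ∃ i, u i ≤ v := by
  rw [show (Set.range fun i => monomial (u i) (1 : R)) = (fun v => monomial v 1) '' Set.range u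
    from Set.range_comp (fun v => monomial v 1) u, mem_ideal_span_monomial_image]
  simp

lemma IsMonomialIdeal.monomial_mem_of_mem_support {R : Type} [CommSemiring R] {m : ℕ}
    {J : Ideal (MvPolynomial (Fin m) R)} (hJ : IsMonomialIdeal J) {q : MvPolynomial (Fin m) R}
    (hq : q ∈ J) {v : Fin m →₀ ℕ} (hv : v ∈ q.support) : monomial v 1 ∈ J := by
  obtain ⟨S, rfl⟩ := hJ
  rw [mem_ideal_span_monomial_image] at hq ⊢
  intro v' hv'
  rw [Finset.mem_singleton.1 (support_monomial_subset hv')]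
  exact hq v hv

theorem closure_eq_of_subset_closure_open {X : Type*} [TopologicalSpace X] {C P U D : Set X}
    (hP : IsClosed P) (hCP : C ⊆ P) (hU : IsOpen U) (hD : Dense D) (hUD : U ∩ D ⊆ C)
    (hPU : P ⊆ closure U) : closure C = P :=
  (closure_minimal hCP hP).antisymm <| hPU.trans <|
    (closure_minimal (hD.open_subset_closure_inter hU) isClosed_closure).trans (closure_mono hUD)

namespace ValSetup

variable {K 𝕜 : Type} [Field K] [Field 𝕜] (V : ValSetup K 𝕜) {m : ℕ}

section Valuation

def valueGroup : AddSubgroup ℝ where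
  carrier := V.Gamma
  zero_mem' := ⟨1, one_ne_zero, V.val_one⟩
  add_mem' := by
    rintro _ _ ⟨a, ha, rfl⟩ ⟨b, hb, rfl⟩
    exact ⟨a * b, mul_ne_zero ha hb, V.val_mul ha hb⟩
  neg_mem' := by
    rintro _ ⟨a, ha, rfl⟩
    refine ⟨a⁻¹, inv_ne_zero ha, ?_⟩
    have h := V.val_mul ha (inv_ne_zero ha)
    rw [mul_inv_cancel₀ ha, V.val_one] at h
    linarith

lemma val_mem_Gamma {a : K} (ha : a ≠ 0) : V.val a ∈ V.Gamma := ⟨a, ha, rfl⟩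

lemma dotN_mem_Gamma {w : Fin m → ℝ} (hw : ∀ i, w i ∈ V.Gamma) (u : Fin m →₀ ℕ) :
    dotN w u ∈ V.Gamma :=
  V.valueGroup.sum_mem fun i _ => by
    rw [mul_comm, ← nsmul_eq_mul]
    exact V.valueGroup.nsmul_mem (hw i) _

lemma t_zero : V.t 0 = 1 := by
  have h0 : (0 : ℝ) ∈ V.Gamma := V.valueGroup.zero_mem
  have h := V.t_add h0 h0
  rw [add_zero] at h
  exact (mul_right_eq_self₀.1 h.symm).resolve_right (V.t_ne_zero h0)

lemma val_t_mul {r : ℝ} (hr : r ∈ V.Gamma) {a : K} (ha : a ≠ 0) :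
    V.val (V.t r * a) = r + V.val a := by
  rw [V.val_mul (V.t_ne_zero hr) ha, V.val_t hr]

/-- The valuation ring `{a : val a ≥ 0}`; `val 0` is junk, so `0` is admitted separately. -/
def integers : Subsemiring K where
  carrier := {a | a = 0 ∨ 0 ≤ V.val a}
  zero_mem' := Or.inl rfl
  one_mem' := Or.inr V.val_one.ge
  add_mem' := by
    rintro a b (rfl | ha) (rfl | hb)
    · simp
    · simpa using Or.inr hb
    · simpa using Or.inr ha
    · by_cases ha0 : a = 0
      · simpa [ha0] using Or.inr hb
      by_cases hb0 : b = 0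
      · simpa [hb0] using Or.inr ha
      by_cases hab : a + b = 0
      · exact Or.inl hab
      exact Or.inr ((le_min ha hb).trans (V.val_add ha0 hb0 hab))
  mul_mem' := by
    rintro a b (rfl | ha) (rfl | hb)
    · simp
    · simp
    · simp
    · by_cases ha0 : a = 0
      · simp [ha0]
      by_cases hb0 : b = 0
      · simp [hb0]
      exact Or.inr (by rw [V.val_mul ha0 hb0]; linarith)

lemma mem_integers_of_val_nonneg {a : K} (ha : 0 ≤ V.val a) : a ∈ V.integers := Or.inr ha

lemma res_ne_zero_of_val_eq_zero {a : K} (ha : a ≠ 0) (h : V.val a = 0) : V.res a ≠ 0 := by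
  rw [Ne, V.res_eq_zero_iff ha h.ge, h]
  exact lt_irrefl 0

lemma res_t_neg_val_mul_ne_zero {a : K} (ha : a ≠ 0) : V.res (V.t (-V.val a) * a) ≠ 0 := by
  have hγ := V.valueGroup.neg_mem (V.val_mem_Gamma ha)
  refine V.res_ne_zero_of_val_eq_zero (mul_ne_zero (V.t_ne_zero hγ) ha) ?_
  rw [V.val_t_mul hγ ha, neg_add_cancel]

lemma res_sum {ι : Type*} {s : Finset ι} {x : ι → K} (hx : ∀ j ∈ s, x j ∈ V.integers) :
    V.res (∑ j ∈ s, x j) = ∑ j ∈ s, V.res (x j) := by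
  induction s using Finset.cons_induction with
  | empty => simp [V.res_zero]
  | cons j s hj ih =>
    rw [Finset.forall_mem_cons] at hx
    rw [Finset.sum_cons, Finset.sum_cons, V.res_add hx.1 (V.integers.sum_mem hx.2), ih hx.2]

lemma exists_t_mul_mem_integers {ι : Type*} (s : Finset ι) (b : ι → K) {j₀ : ι}
    (hj₀ : j₀ ∈ s) (hb : b j₀ ≠ 0) :
    ∃ μ, (∀ j ∈ s, V.t μ * b j ∈ V.integers) ∧ ∃ j ∈ s, V.res (V.t μ * b j) ≠ 0 := by
  obtain ⟨j₁, hj₁, hmin⟩ := (s.filter (b · ≠ 0)).exists_min_image (fun j => V.val (b j))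
    ⟨j₀, Finset.mem_filter.2 ⟨hj₀, hb⟩⟩
  rw [Finset.mem_filter] at hj₁
  have hμ : -V.val (b j₁) ∈ V.Gamma := V.valueGroup.neg_mem (V.val_mem_Gamma hj₁.2)
  refine ⟨-V.val (b j₁), fun j hj => ?_, j₁, hj₁.1, ?_⟩
  · by_cases hbj : b j = 0
    · simp [hbj, V.integers.zero_mem]
    · refine V.mem_integers_of_val_nonneg ?_
      rw [V.val_t_mul hμ hbj]
      linarith [hmin j (Finset.mem_filter.2 ⟨hj, hbj⟩)]
  · refine V.res_ne_zero_of_val_eq_zero (mul_ne_zero (V.t_ne_zero hμ) hj₁.2) ?_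
    rw [V.val_t_mul hμ hj₁.2, neg_add_cancel]

end Valuation

section InitialForm

variable {w : Fin m → ℝ} {f : MvPolynomial (Fin m) K}

lemma trop_le {u : Fin m →₀ ℕ} (hu : u ∈ f.support) :
    V.trop f w ≤ V.val (coeff u f) + dotN w u :=
  csInf_le ((f.support.finite_toSet.image _).bddBelow) ⟨u, hu, rfl⟩

lemma le_trop (hf : f ≠ 0) {c : ℝ} (h : ∀ u ∈ f.support, c ≤ V.val (coeff u f) + dotN w u) :
    c ≤ V.trop f w :=
  le_csInf ((Finset.coe_nonempty.2 (support_nonempty.2 hf)).image _)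
    (by rintro _ ⟨u, hu, rfl⟩; exact h u hu)

lemma exists_trop_eq (hf : f ≠ 0) :
    ∃ u ∈ f.support, V.val (coeff u f) + dotN w u = V.trop f w :=
  ((Finset.coe_nonempty.2 (support_nonempty.2 hf)).image _).csInf_mem
    (f.support.finite_toSet.image _)

lemma trop_mem_Gamma (hw : ∀ i, w i ∈ V.Gamma) (hf : f ≠ 0) : V.trop f w ∈ V.Gamma := by
  obtain ⟨u, hu, h⟩ := V.exists_trop_eq (w := w) hf
  rw [← h]
  exact V.valueGroup.add_mem (V.val_mem_Gamma (mem_support_iff.1 hu)) (V.dotN_mem_Gamma hw u)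

lemma coeff_initialForm (u : Fin m →₀ ℕ) :
    coeff u (V.initialForm w f) = if V.val (coeff u f) + dotN w u = V.trop f w
      then V.res (V.t (-V.val (coeff u f)) * coeff u f) else 0 := by
  rw [initialForm, coeff_sum]
  simp only [coeff_monomial, Finset.sum_ite_eq', Finset.mem_filter, mem_support_iff]
  by_cases hu : coeff u f = 0
  · simp [hu, V.res_zero]
  · simp [hu]

lemma support_initialForm :
    (V.initialForm w f).support =
      f.support.filter fun u => V.val (coeff u f) + dotN w u = V.trop f w := by
  ext u
  rw [Finset.mem_filter, mem_support_iff, mem_support_iff, V.coeff_initialForm]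
  split_ifs with h
  · refine ⟨fun hres => ⟨fun hu => hres (by rw [hu, mul_zero, V.res_zero]), h⟩,
      fun hu => V.res_t_neg_val_mul_ne_zero hu.1⟩
  · simp [h]

lemma support_initialForm_subset : (V.initialForm w f).support ⊆ f.support := by
  rw [support_initialForm]
  exact Finset.filter_subset _ _

lemma initialForm_eq_zero_iff : V.initialForm w f = 0 ↔ f = 0 := by
  refine ⟨fun h => by_contra fun hf => ?_, fun h => by simp [h, initialForm]⟩
  obtain ⟨u, hu, heq⟩ := V.exists_trop_eq (w := w) hf
  have : u ∈ (V.initialForm w f).support := by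
    rw [support_initialForm, Finset.mem_filter]
    exact ⟨hu, heq⟩
  simp [h] at this

lemma initialForm_eq_monomial_iff {u₀ : Fin m →₀ ℕ} (h₀ : coeff u₀ f = 1) :
    V.initialForm w f = monomial u₀ 1 ↔
      ∀ v ∈ f.support, v ≠ u₀ → dotN w u₀ < V.val (coeff v f) + dotN w v := by
  have hu₀ : u₀ ∈ f.support := by simp [h₀]
  have hval₀ : V.val (coeff u₀ f) + dotN w u₀ = dotN w u₀ := by rw [h₀, V.val_one, zero_add]
  constructor
  · intro h v hv hne
    have hsupp := congrArg MvPolynomial.support h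
    rw [support_monomial, if_neg one_ne_zero, support_initialForm, Finset.ext_iff] at hsupp
    have htrop : V.trop f w = dotN w u₀ := by
      simpa [hu₀, hval₀, eq_comm] using hsupp u₀
    refine (htrop ▸ V.trop_le hv).lt_of_ne fun heq => hne ?_
    simpa [hv, htrop, heq] using hsupp v
  · intro h
    have htrop : V.trop f w = dotN w u₀ :=
      le_antisymm (hval₀ ▸ V.trop_le hu₀) (V.le_trop (by rintro rfl; simp at hu₀) fun v hv =>
        if hvu : v = u₀ then by subst hvu; exact hval₀.ge else (h v hv hvu).le)
    ext v
    rw [coeff_monomial]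
    by_cases hvu : u₀ = v
    · subst hvu
      simp [coeff_initialForm, htrop, h₀, V.val_one, V.t_zero, V.res_one]
    · rw [if_neg hvu, ← notMem_support_iff]
      intro hv
      rw [support_initialForm, Finset.mem_filter, htrop] at hv
      exact (h v hv.1 (Ne.symm hvu)).ne' hv.2

lemma initialForm_monomial_mul_of_eq_monomial {u₀ : Fin m →₀ ℕ} (h₀ : coeff u₀ f = 1)
    (h : V.initialForm w f = monomial u₀ 1) (b : Fin m →₀ ℕ) :
    V.initialForm w (monomial b 1 * f) = monomial (b + u₀) 1 := by
  rw [initialForm_eq_monomial_iff _ h₀] at h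
  rw [initialForm_eq_monomial_iff _ (by rw [coeff_monomial_mul, h₀, one_mul])]
  intro v hv hne
  rw [mem_support_iff, coeff_monomial_mul'] at hv
  obtain ⟨v', rfl⟩ := le_iff_exists_add.1 (show b ≤ v by by_contra hbv; simp [hbv] at hv)
  rw [if_pos le_self_add, add_tsub_cancel_left, one_mul] at hv
  have := h v' (mem_support_iff.2 hv) fun h' => hne (h' ▸ rfl)
  rw [coeff_monomial_mul, one_mul, dotN_add_right, dotN_add_right]
  linarith

lemma trop_le_trop_homogeneousComponent (d : ℕ) (hd : homogeneousComponent d f ≠ 0) :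
    V.trop f w ≤ V.trop (homogeneousComponent d f) w :=
  V.le_trop hd fun u hu => by
    rw [support_homogeneousComponent, Finset.mem_filter] at hu
    rw [coeff_homogeneousComponent, if_pos hu.2]
    exact V.trop_le hu.1

lemma homogeneousComponent_initialForm (d : ℕ) :
    homogeneousComponent d (V.initialForm w f) =
      if V.trop (homogeneousComponent d f) w = V.trop f w
      then V.initialForm w (homogeneousComponent d f) else 0 := by
  ext u
  rw [coeff_homogeneousComponent]
  by_cases hdeg : u.degree = d
  · rw [if_pos hdeg]
    split_ifs with htrop
    · rw [coeff_initialForm, coeff_initialForm, coeff_homogeneousComponent, if_pos hdeg, htrop]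
    · rw [coeff_zero, ← notMem_support_iff, support_initialForm, Finset.mem_filter]
      rintro ⟨hu, heq⟩
      have hud : u ∈ (homogeneousComponent d f).support := by
        rw [support_homogeneousComponent, Finset.mem_filter]
        exact ⟨hu, hdeg⟩
      refine htrop (le_antisymm ?_ (V.trop_le_trop_homogeneousComponent d
        (by rintro h; simp [h] at hud)))
      have := V.trop_le (w := w) hud
      rwa [coeff_homogeneousComponent, if_pos hdeg, heq] at this
  · rw [if_neg hdeg]
    split_ifs
    · rw [eq_comm, ← notMem_support_iff]
      intro hu
      have := V.support_initialForm_subset hu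
      rw [support_homogeneousComponent, Finset.mem_filter] at this
      exact hdeg this.2
    · rw [coeff_zero]

lemma initialForm_mem_of_forall_homogeneousComponent {J : Ideal (MvPolynomial (Fin m) 𝕜)}
    (h : ∀ d, V.initialForm w (homogeneousComponent d f) ∈ J) : V.initialForm w f ∈ J := by
  rw [← sum_homogeneousComponent (V.initialForm w f)]
  refine J.sum_mem fun d _ => ?_
  rw [homogeneousComponent_initialForm]
  split_ifs
  exacts [h d, J.zero_mem]

lemma initialForm_homogeneousComponent_of_eq_monomial {u₀ : Fin m →₀ ℕ}
    (h : V.initialForm w f = monomial u₀ 1) :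
    V.initialForm w (homogeneousComponent u₀.degree f) = monomial u₀ 1 := by
  have hc := V.homogeneousComponent_initialForm (w := w) (f := f) u₀.degree
  rw [h, homogeneousComponent_of_mem (isHomogeneous_monomial _ rfl), if_pos rfl] at hc
  split_ifs at hc
  · exact hc.symm
  · exact absurd hc (monomial_eq_zero.not.2 one_ne_zero)

lemma t_mul_coeff_mem_integers (hw : ∀ i, w i ∈ V.Gamma) (hf : f ≠ 0) (u : Fin m →₀ ℕ) :
    V.t (dotN w u - V.trop f w) * coeff u f ∈ V.integers := by
  by_cases hu : u ∈ f.support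
  · have hγ := V.valueGroup.sub_mem (V.dotN_mem_Gamma hw u) (V.trop_mem_Gamma hw hf)
    refine V.mem_integers_of_val_nonneg ?_
    rw [V.val_t_mul hγ (mem_support_iff.1 hu)]
    linarith [V.trop_le (w := w) hu]
  · rw [notMem_support_iff.1 hu, mul_zero]
    exact V.integers.zero_mem

/-- For `w ∈ Γ^m`, the initial form is the coefficientwise reduction of `t^{-trop f w} f(t^w x)`. -/
lemma coeff_initialForm_eq_res (hw : ∀ i, w i ∈ V.Gamma) (hf : f ≠ 0) (u : Fin m →₀ ℕ) :
    coeff u (V.initialForm w f) = V.res (V.t (dotN w u - V.trop f w) * coeff u f) := by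
  rw [coeff_initialForm]
  split_ifs with h
  · rw [← h, sub_add_cancel_right]
  by_cases hu : u ∈ f.support
  · have hγ := V.valueGroup.sub_mem (V.dotN_mem_Gamma hw u) (V.trop_mem_Gamma hw hf)
    have hc := mem_support_iff.1 hu
    have hpos : 0 < V.val (V.t (dotN w u - V.trop f w) * coeff u f) := by
      rw [V.val_t_mul hγ hc]
      linarith [(V.trop_le (w := w) hu).lt_of_ne' h]
    exact ((V.res_eq_zero_iff (mul_ne_zero (V.t_ne_zero hγ) hc) hpos.le).2 hpos).symm
  · rw [notMem_support_iff.1 hu, mul_zero, V.res_zero]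

lemma linearIndependent_of_initialForm (hw : ∀ i, w i ∈ V.Gamma) {ι : Type*}
    (f : ι → MvPolynomial (Fin m) K)
    (hli : LinearIndependent 𝕜 fun j => V.initialForm w (f j)) : LinearIndependent K f := by
  rw [linearIndependent_iff']
  intro s a hsum j₀ hj₀
  by_contra ha
  have hf : ∀ j, f j ≠ 0 := fun j hj => hli.ne_zero j ((V.initialForm_eq_zero_iff).2 hj)
  have hτ : ∀ j, V.trop (f j) w ∈ V.Gamma := fun j => V.trop_mem_Gamma hw (hf j)
  -- normalize the relation `∑ a j • f j = 0` so that its reduction is a nontrivial relation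
  -- among the initial forms
  obtain ⟨μ, hint, j₁, hj₁, hres⟩ := V.exists_t_mul_mem_integers s
    (fun j => a j * V.t (V.trop (f j) w)) hj₀ (mul_ne_zero ha (V.t_ne_zero (hτ j₀)))
  set c : ι → K := fun j => V.t μ * (a j * V.t (V.trop (f j) w))
  refine hres (linearIndependent_iff'.1 hli s (fun j => V.res (c j)) ?_ j₁ hj₁)
  ext u
  have hint' : ∀ j ∈ s, V.t (dotN w u - V.trop (f j) w) * coeff u (f j) ∈ V.integers :=
    fun j _ => V.t_mul_coeff_mem_integers hw (hf j) u
  have hterm : ∀ j, c j * (V.t (dotN w u - V.trop (f j) w) * coeff u (f j)) =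
      V.t μ * V.t (dotN w u) * (a j * coeff u (f j)) := fun j => by
    rw [← sub_add_cancel (dotN w u) (V.trop (f j) w),
      V.t_add (V.valueGroup.sub_mem (V.dotN_mem_Gamma hw u) (hτ j)) (hτ j), add_sub_cancel_right]
    ring
  calc coeff u (∑ j ∈ s, V.res (c j) • V.initialForm w (f j))
      = ∑ j ∈ s, V.res (c j * (V.t (dotN w u - V.trop (f j) w) * coeff u (f j))) := by
        simp only [coeff_sum, coeff_smul, smul_eq_mul, V.coeff_initialForm_eq_res hw (hf _)]
        exact Finset.sum_congr rfl fun j hj => (V.res_mul (hint j hj) (hint' j hj)).symm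
    _ = V.res (V.t μ * V.t (dotN w u) * coeff u (∑ j ∈ s, a j • f j)) := by
        rw [← V.res_sum fun j hj => V.integers.mul_mem (hint j hj) (hint' j hj)]
        simp only [coeff_sum, coeff_smul, smul_eq_mul, Finset.mul_sum]
        exact congrArg V.res (Finset.sum_congr rfl fun j _ => hterm j)
    _ = coeff u 0 := by rw [hsum, coeff_zero, mul_zero, V.res_zero, coeff_zero]

lemma rank_span_initialForm_le (hw : ∀ i, w i ∈ V.Gamma)
    (W : Submodule K (MvPolynomial (Fin m) K)) :
    Module.rank 𝕜 (Submodule.span 𝕜 (V.initialForm w '' W)) ≤ Module.rank K W := by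
  obtain ⟨b, hbW, hspan, hli⟩ := exists_linearIndependent 𝕜 (V.initialForm w '' W)
  have hlift : ∀ x : b, ∃ p : W, V.initialForm w p = x := fun x => by
    obtain ⟨p, hp, h⟩ := hbW x.2
    exact ⟨⟨p, hp⟩, h⟩
  choose P hP using hlift
  have hPli : LinearIndependent K P :=
    .of_comp W.subtype (V.linearIndependent_of_initialForm hw _ (by simpa [hP] using hli))
  rw [← hspan, rank_span_set hli]
  exact hPli.cardinal_le_rank

end InitialForm

lemma initialForm_mem_initialIdeal_of_mem_homogeneousPart {w w' : Fin m → ℝ}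
    (hw : ∀ i, w i ∈ V.Gamma) {I : Ideal (MvPolynomial (Fin m) K)} (hI : IsHomogIdeal I)
    {s : ℕ} {g : Fin s → MvPolynomial (Fin m) K} {u : Fin s → Fin m →₀ ℕ}
    (hgI : ∀ i, g i ∈ I) (hlead : ∀ i, coeff (u i) (g i) = 1)
    (hGB : V.initialIdeal w' I =
      Ideal.span (Set.range fun i => (monomial (u i) 1 : MvPolynomial (Fin m) 𝕜)))
    (hin : ∀ i, V.initialForm w (g i) = monomial (u i) 1)
    {d : ℕ} {f : MvPolynomial (Fin m) K} (hf : f ∈ I.homogeneousPart d) :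
    V.initialForm w f ∈ V.initialIdeal w' I := by
  -- `B ≤ A` and `dim A ≤ dim I_d ≤ #E ≤ dim B`, the middle step because a nonzero `p ∈ I_d` has
  -- a nonzero coefficient at every monomial of `in_{w'}(p) ∈ ⟨x^{u_i}⟩`, and these lie in `E`
  set E : Set (Fin m →₀ ℕ) := {v | v.degree = d ∧ ∃ i, u i ≤ v}
  set A := Submodule.span 𝕜 (V.initialForm w '' I.homogeneousPart d)
  set B := Submodule.span 𝕜 ((fun v => (monomial v 1 : MvPolynomial (Fin m) 𝕜)) '' E)
  have hBJ : B ≤ (V.initialIdeal w' I).restrictScalars 𝕜 := by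
    refine Submodule.span_le.2 ?_
    rintro _ ⟨v, ⟨-, hv⟩, rfl⟩
    simpa [hGB, mem_ideal_span_range_monomial] using hv
  have hBA : B ≤ A := by
    refine Submodule.span_le.2 ?_
    rintro _ ⟨v, ⟨hvd, i, hiv⟩, rfl⟩
    obtain ⟨b, rfl⟩ := le_iff_exists_add.1 hiv
    have hc : coeff (u i) (homogeneousComponent (u i).degree (g i)) = 1 := by
      rw [coeff_homogeneousComponent, if_pos rfl, hlead i]
    refine Submodule.subset_span ⟨monomial b 1 * homogeneousComponent (u i).degree (g i),
      ⟨I.mul_mem_left _ (hI _ (hgI i) _), ?_⟩, ?_⟩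
    · rw [← hvd, map_add, add_comm]
      exact (isHomogeneous_monomial _ rfl).mul (homogeneousComponent_isHomogeneous _ _)
    · rw [V.initialForm_monomial_mul_of_eq_monomial hc
        (V.initialForm_homogeneousComponent_of_eq_monomial (hin i)), add_comm]
  have hIE : Module.rank K (I.homogeneousPart d) ≤ Cardinal.mk E := by
    refine MvPolynomial.rank_le_of_exists_coeff_ne_zero _ E fun p hp hp0 => ?_
    obtain ⟨v, hv⟩ := support_nonempty.2 ((V.initialForm_eq_zero_iff (w := w')).not.2 hp0)
    have hJ : V.initialForm w' p ∈ V.initialIdeal w' I := Ideal.subset_span ⟨p, hp.1, rfl⟩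
    rw [hGB, mem_ideal_span_range_monomial] at hJ
    have hvp := mem_support_iff.1 (V.support_initialForm_subset hv)
    exact ⟨v, ⟨by_contra fun hd => hvp (hp.2.coeff_eq_zero hd), hJ v hv⟩, hvp⟩
  have : Module.Finite 𝕜 B :=
    FiniteDimensional.span_of_finite 𝕜 (((Finsupp.finite_of_degree_eq d).subset
      fun _ hv => hv.1).image _)
  have hAB : B = A := Submodule.eq_of_le_of_rank_le hBA
    ((V.rank_span_initialForm_le hw _).trans
      (hIE.trans (MvPolynomial.cardinal_le_rank_span_monomial E)))
  exact hBJ (hAB ▸ Submodule.subset_span ⟨f, hf, rfl⟩)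

section Regions

variable {s : ℕ}

def leadingPolyhedron (g : Fin s → MvPolynomial (Fin m) K) (u : Fin s → Fin m →₀ ℕ) :
    Set (Fin m → ℝ) :=
  {x | ∀ i, ∀ v ∈ (g i).support, v ≠ u i → dotN x (u i) ≤ V.val (coeff v (g i)) + dotN x v}

def strictLeadingRegion (g : Fin s → MvPolynomial (Fin m) K) (u : Fin s → Fin m →₀ ℕ) :
    Set (Fin m → ℝ) :=
  {x | ∀ i, ∀ v ∈ (g i).support, v ≠ u i → dotN x (u i) < V.val (coeff v (g i)) + dotN x v}

variable {V} {g : Fin s → MvPolynomial (Fin m) K} {u : Fin s → Fin m →₀ ℕ}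

lemma isClosed_leadingPolyhedron : IsClosed (V.leadingPolyhedron g u) := by
  simp only [leadingPolyhedron, Set.ofPred_forall]
  exact isClosed_iInter fun i => isClosed_iInter fun v => isClosed_iInter fun _ =>
    isClosed_iInter fun _ =>
      isClosed_le (continuous_dotN _) (continuous_const.add (continuous_dotN _))

lemma isOpen_strictLeadingRegion : IsOpen (V.strictLeadingRegion g u) := by
  have : V.strictLeadingRegion g u = ⋂ i, ⋂ v ∈ (g i).support.erase (u i),
      {x | dotN x (u i) < V.val (coeff v (g i)) + dotN x v} := by
    ext x
    simp only [strictLeadingRegion, Set.mem_ofPred_eq, Set.mem_iInter, Finset.mem_erase]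
    exact forall_congr' fun i => forall_congr' fun v => by tauto
  rw [this]
  exact isOpen_iInter_of_finite fun i => isOpen_biInter_finset fun v _ =>
    isOpen_lt (continuous_dotN _) (continuous_const.add (continuous_dotN _))

lemma leadingPolyhedron_subset_closure {w : Fin m → ℝ} (hw : w ∈ V.strictLeadingRegion g u) :
    V.leadingPolyhedron g u ⊆ closure (V.strictLeadingRegion g u) := by
  intro x hx
  refine closure_mono ?_ (segment_subset_closure_openSegment (left_mem_segment ℝ x w))
  rintro _ ⟨a, b, ha, hb, hab, rfl⟩ i v hv hne
  rw [dotN_smul_add_smul, dotN_smul_add_smul]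
  have hval : V.val (coeff v (g i)) = a * V.val (coeff v (g i)) + b * V.val (coeff v (g i)) := by
    rw [← add_mul, hab, one_mul]
  linarith [mul_le_mul_of_nonneg_left (hx i v hv hne) ha.le,
    mul_lt_mul_of_pos_left (hw i v hv hne) hb]

lemma dotN_le_of_initialForm_mem {J : Ideal (MvPolynomial (Fin m) 𝕜)} (hJ : IsMonomialIdeal J)
    {w : Fin m → ℝ} {f : MvPolynomial (Fin m) K} {u₀ : Fin m →₀ ℕ} (h₀ : coeff u₀ f = 1)
    (hfJ : V.initialForm w f ∈ J) (hred : ∀ v ∈ f.support, v ≠ u₀ → monomial v 1 ∉ J) :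
    ∀ v ∈ f.support, dotN w u₀ ≤ V.val (coeff v f) + dotN w v := by
  intro v hv
  by_contra! hlt
  obtain ⟨v', hv', heq⟩ := V.exists_trop_eq (w := w) (f := f) (by rintro rfl; simp at h₀)
  have hv'in : v' ∈ (V.initialForm w f).support := by
    rw [support_initialForm, Finset.mem_filter]
    exact ⟨hv', heq⟩
  refine hred v' hv' ?_ (hJ.monomial_mem_of_mem_support hfJ hv'in)
  rintro rfl
  rw [h₀, V.val_one, zero_add] at heq
  linarith [V.trop_le (w := w) hv]

lemma groebnerRegion_subset_leadingPolyhedron {I : Ideal (MvPolynomial (Fin m) K)}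
    {w' : Fin m → ℝ} (hmono : IsMonomialIdeal (V.initialIdeal w' I)) (hgI : ∀ i, g i ∈ I)
    (hlead : ∀ i, coeff (u i) (g i) = 1)
    (hred : ∀ i, ∀ v ∈ (g i).support, v ≠ u i →
      (monomial v 1 : MvPolynomial (Fin m) 𝕜) ∉ V.initialIdeal w' I) :
    V.groebnerRegion I w' ⊆ V.leadingPolyhedron g u := by
  rintro x ⟨-, hx⟩ i v hv -
  exact V.dotN_le_of_initialForm_mem hmono (hlead i)
    (hx ▸ Ideal.subset_span ⟨g i, hgI i, rfl⟩) (hred i) v hv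

lemma mem_strictLeadingRegion_iff (hlead : ∀ i, coeff (u i) (g i) = 1) {x : Fin m → ℝ} :
    x ∈ V.strictLeadingRegion g u ↔ ∀ i, V.initialForm x (g i) = monomial (u i) 1 :=
  forall_congr' fun i => (V.initialForm_eq_monomial_iff (hlead i)).symm

lemma mem_groebnerRegion_of_mem_strictLeadingRegion {I : Ideal (MvPolynomial (Fin m) K)}
    {w' : Fin m → ℝ} (hI : IsHomogIdeal I) (hgI : ∀ i, g i ∈ I)
    (hlead : ∀ i, coeff (u i) (g i) = 1)
    (hGB : V.initialIdeal w' I =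
      Ideal.span (Set.range fun i => (monomial (u i) 1 : MvPolynomial (Fin m) 𝕜)))
    {x : Fin m → ℝ} (hx : ∀ i, x i ∈ V.Gamma) (hxs : x ∈ V.strictLeadingRegion g u) :
    x ∈ V.groebnerRegion I w' := by
  have hin := (mem_strictLeadingRegion_iff hlead).1 hxs
  refine ⟨hx, le_antisymm (Ideal.span_le.2 ?_) (hGB ▸ Ideal.span_le.2 ?_)⟩
  · rintro _ ⟨p, hp, rfl⟩
    exact V.initialForm_mem_of_forall_homogeneousComponent fun d =>
      V.initialForm_mem_initialIdeal_of_mem_homogeneousPart hx hI hgI hlead hGB hin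
        ⟨hI p hp d, homogeneousComponent_isHomogeneous d p⟩
  · rintro _ ⟨i, rfl⟩
    exact Ideal.subset_span ⟨g i, hgI i, (hin i).symm⟩

end Regions

end ValSetup

theorem closure_groebnerRegion_eq_general {K 𝕜 : Type} [Field K] [Field 𝕜] (V : ValSetup K 𝕜)
    (hdense : Dense V.Gamma) {n : ℕ}
    (I : Ideal (MvPolynomial (Fin (n+1)) K)) (hI : IsHomogIdeal I)
    (w' : Fin (n+1) → ℝ)
    (hmono : IsMonomialIdeal (V.initialIdeal w' I))
    (s : ℕ) (g : Fin s → MvPolynomial (Fin (n+1)) K) (u : Fin s → (Fin (n+1) →₀ ℕ))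
    (hgI : ∀ i, g i ∈ I)
    (hlead : ∀ i, coeff (u i) (g i) = 1)
    (hin : ∀ i, V.initialForm w' (g i) = monomial (u i) 1)
    (hGB : V.initialIdeal w' I
      = Ideal.span (Set.range fun i => (monomial (u i) 1 : MvPolynomial (Fin (n+1)) 𝕜)))
    (hred : ∀ i, ∀ v ∈ (g i).support, v ≠ u i →
      (monomial v 1 : MvPolynomial (Fin (n+1)) 𝕜) ∉ V.initialIdeal w' I) :
    closure (V.groebnerRegion I w')
      = {x : Fin (n+1) → ℝ | ∀ i, ∀ v ∈ (g i).support, v ≠ u i →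
          dotN x (u i) ≤ V.val (coeff v (g i)) + dotN x v} := by
  have hΓ : Dense {x : Fin (n+1) → ℝ | ∀ i, x i ∈ V.Gamma} := by
    simpa [Set.pi] using dense_pi Set.univ fun _ _ => hdense
  exact closure_eq_of_subset_closure_open ValSetup.isClosed_leadingPolyhedron
    (V.groebnerRegion_subset_leadingPolyhedron hmono hgI hlead hred)
    ValSetup.isOpen_strictLeadingRegion hΓ
    (fun x hx => V.mem_groebnerRegion_of_mem_strictLeadingRegion hI hgI hlead hGB hx.2 hx.1)
    (ValSetup.leadingPolyhedron_subset_closure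
      ((ValSetup.mem_strictLeadingRegion_iff hlead).2 hin))

/-- (From the proof of Theorem 2.5.)  Let `I ⊆ K[x_0,…,x_n]` be a homogeneous ideal and
`w' ∈ Γ^{n+1}` with `in_{w'}(I)` a monomial ideal.  Let `g_1,…,g_s` be a Gröbner basis for
`I` with respect to `w'`, with `g_i = x^{u_i} + Σ_v c_{iv} x^v`, `in_{w'}(g_i) = x^{u_i}`,
and `c_{iv} ≠ 0 ⇒ x^v ∉ in_{w'}(I)`.  Then
`closure C_I[w'] = {x ∈ ℝ^{n+1} : x·u_i ≤ val(c_{iv}) + x·v for all i and all v with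
c_{iv} ≠ 0}`. -/
theorem closure_groebnerRegion_eq {K 𝕜 : Type} [Field K] [Field 𝕜] (V : ValSetup K 𝕜)
    (hdense : Dense V.Gamma) (hQ : ∀ q : ℚ, (q : ℝ) ∈ V.Gamma) {n : ℕ}
    (I : Ideal (MvPolynomial (Fin (n+1)) K)) (hI : IsHomogIdeal I)
    (w' : Fin (n+1) → ℝ) (hw' : ∀ i, w' i ∈ V.Gamma)
    (hmono : IsMonomialIdeal (V.initialIdeal w' I))
    (s : ℕ) (g : Fin s → MvPolynomial (Fin (n+1)) K) (u : Fin s → (Fin (n+1) →₀ ℕ))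
    (hgI : ∀ i, g i ∈ I)
    (hlead : ∀ i, coeff (u i) (g i) = 1)
    (hin : ∀ i, V.initialForm w' (g i) = monomial (u i) 1)
    (hGB : V.initialIdeal w' I
      = Ideal.span (Set.range fun i => (monomial (u i) 1 : MvPolynomial (Fin (n+1)) 𝕜)))
    (hred : ∀ i, ∀ v ∈ (g i).support, v ≠ u i →
      (monomial v 1 : MvPolynomial (Fin (n+1)) 𝕜) ∉ V.initialIdeal w' I) :
    closure (V.groebnerRegion I w')
      = {x : Fin (n+1) → ℝ | ∀ i, ∀ v ∈ (g i).support, v ≠ u i →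
          dotN x (u i) ≤ V.val (coeff v (g i)) + dotN x v} :=
  closure_groebnerRegion_eq_general V hdense I hI w' hmono s g u hgI hlead hin hGB hred
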